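/- Let p be a prime and let n = n_0 + n_1 p + ... + n_r p^r be the base-p expansion of n with 0 ≤ n_j < p/2 for all j. Then u(n) ≡ u(n_0) u(n_1) ⋯ u(n_r) (mod p), where u(n) = ∑_{k=0}^n (-1)^k C(n,k) C(2n,k). -/

import Mathlib

def u (n : ℕ) : ℤ :=
  ∑ j ∈ Finset.range (n + 1), (-1 : ℤ) ^ j * (n.choose j) * ((2 * n).choose j)

open Polynomial

lemma coeff_one_sub_X_pow (m k : ℕ) :
    ((1 - X : Polynomial ℤ) ^ m).coeff k = (-1) ^ k * m.choose k := by
  have h : (1 - X : Polynomial ℤ) = -(X + C (-1)) := by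
    simp [C_neg]; ring
  rw [h, neg_pow]
  have h2 : ((-1 : Polynomial ℤ) ^ m) = C ((-1 : ℤ) ^ m) := by simp
  rw [h2, coeff_C_mul, coeff_X_add_C_pow]
  rcases le_or_gt k m with hk | hk
  · obtain ⟨d, rfl⟩ : ∃ d, m = k + d := ⟨m - k, (Nat.add_sub_cancel' hk).symm⟩
    have hd : k + d - k = d := by omega
    rw [hd]
    ring_nf
    rw [show d * 2 = 2 * d by ring, pow_mul]
    norm_num
  · rw [Nat.choose_eq_zero_of_lt hk]
    simp

lemma u_eq_coeff (n : ℕ) :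
    u n = ((((1 + X) * (1 - X) ^ 2 : Polynomial ℤ)) ^ n).coeff n := by
  rw [mul_pow, ← pow_mul, coeff_mul, Finset.Nat.sum_antidiagonal_eq_sum_range_succ_mk]
  rw [u, ← Finset.sum_range_reflect]
  refine Finset.sum_congr rfl fun k hk => ?_
  rw [Finset.mem_range] at hk
  have hk' : k ≤ n := by omega
  have h1 : n + 1 - 1 - k = n - k := by omega
  rw [h1, coeff_one_add_X_pow, coeff_one_sub_X_pow]
  rw [Nat.choose_symm hk']
  ring

lemma key (p : ℕ) [hFp : Fact p.Prime] (q r : ℕ) (hr : 2 * r < p) :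
    ((u (p * q + r) : ℤ) : ZMod p) = ((u r : ℤ) : ZMod p) * ((u q : ℤ) : ZMod p) := by
  have hp := hFp.out
  set Q : Polynomial (ZMod p) := (1 + X) * (1 - X) ^ 2 with hQ
  have hcast : ∀ m : ℕ, ((u m : ℤ) : ZMod p) = (Q ^ m).coeff m := by
    intro m
    have hmapQ : Q = Polynomial.map (Int.castRingHom (ZMod p)) ((1 + X) * (1 - X) ^ 2) := by
      simp [hQ]
    rw [u_eq_coeff, hmapQ, ← Polynomial.map_pow, Polynomial.coeff_map, eq_intCast]
  have hexp : ∀ f : Polynomial (ZMod p), Polynomial.expand (ZMod p) p f = f ^ p := by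
    intro f
    have := Polynomial.map_frobenius_expand p f
    rwa [ZMod.frobenius_zmod, Polynomial.map_id] at this
  have hdegQ : Q.natDegree ≤ 3 := by
    have : Q = 1 - X - X ^ 2 + X ^ 3 := by rw [hQ]; ring
    rw [this]
    compute_degree
  have hdegpow : ∀ m : ℕ, (Q ^ m).natDegree ≤ 3 * m := by
    intro m
    calc (Q ^ m).natDegree ≤ m * Q.natDegree := Polynomial.natDegree_pow_le
    _ ≤ m * 3 := Nat.mul_le_mul_left m hdegQ
    _ = 3 * m := by ring
  have hsplit : Q ^ (p * q + r) = Q ^ r * Polynomial.expand (ZMod p) p (Q ^ q) := by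
    rw [hexp, ← pow_mul, ← pow_add]
    ring_nf
  rw [hcast, hcast, hcast, hsplit, coeff_mul]
  rw [Finset.sum_eq_single (r, p * q)]
  · rw [Polynomial.coeff_expand_mul' hp.pos]
  · rintro ⟨i, j⟩ hmem hne
    rw [Finset.HasAntidiagonal.mem_antidiagonal] at hmem
    simp only at hmem ⊢
    rcases lt_or_ge (3 * r) i with hi | hi
    · rw [Polynomial.coeff_eq_zero_of_natDegree_lt (lt_of_le_of_lt (hdegpow r) hi)]
      exact zero_mul _
    · rw [Polynomial.coeff_expand hp.pos]
      split_ifs with hdvd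
      · obtain ⟨k, rfl⟩ := hdvd
        exfalso
        apply hne
        have hkq : k = q := by
          rcases lt_or_ge k q with h | h
          · exfalso
            have h1 : p * (k + 1) ≤ p * q := Nat.mul_le_mul_left p h
            rw [Nat.mul_add, Nat.mul_one] at h1
            linarith
          rcases lt_or_ge q k with h' | h'
          · exfalso
            have h1 : p * (q + 1) ≤ p * k := Nat.mul_le_mul_left p h'
            rw [Nat.mul_add, Nat.mul_one] at h1
            linarith
          omega
        subst hkq
        have : i = r := by omega
        simp [this]
      · exact mul_zero _
  · intro hnot
    exfalso
    apply hnot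
    rw [Finset.HasAntidiagonal.mem_antidiagonal]
    omega

theorem stmt_1 (p : ℕ) (hp : p.Prime) (n : ℕ)
    (hdigits : ∀ d ∈ Nat.digits p n, 2 * d < p) :
    u n ≡ ((Nat.digits p n).map u).prod [ZMOD (p : ℤ)] := by
  haveI : Fact p.Prime := ⟨hp⟩
  have main : ∀ n : ℕ, (∀ d ∈ Nat.digits p n, 2 * d < p) →
      ((u n : ℤ) : ZMod p) = ((((Nat.digits p n).map u).prod : ℤ) : ZMod p) := by
    intro n
    induction n using Nat.strong_induction_on with
    | _ n ih =>
      intro hd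
      rcases eq_or_ne n 0 with rfl | hn
      · simp [u]
      · have hpos : 0 < n := Nat.pos_of_ne_zero hn
        have hdig : Nat.digits p n = n % p :: Nat.digits p (n / p) :=
          Nat.digits_def' hp.two_le hpos
        rw [hdig, List.map_cons, List.prod_cons]
        have h1 : 2 * (n % p) < p := hd _ (by rw [hdig]; exact List.mem_cons_self)
        have h2 : ∀ d ∈ Nat.digits p (n / p), 2 * d < p := fun d hdm =>
          hd d (by rw [hdig]; exact List.mem_cons_of_mem _ hdm)
        have hlt : n / p < n := Nat.div_lt_self hpos hp.one_lt
        have hrec := key p (n / p) (n % p) h1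
        rw [Nat.div_add_mod] at hrec
        rw [hrec, ih _ hlt h2]
        push_cast
        ring
  have := main n hdigits
  rwa [ZMod.intCast_eq_intCast_iff] at this
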